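/- The star-controlled GCID system with three components, alphabet V = T = {a, b, c, d}, axiom abcd in component C1, initial and final component C1, and rules r1.1: (1, (a, a, λ)_I, 2), r1.2: (1, (b, b, λ)_I, 3), r2.1: (2, (c, c, λ)_I, 1), r3.1: (3, (d, d, λ)_I, 1) generates exactly the cross-serial-dependency language { aⁿbᵐcⁿdᵐ : m, n ≥ 1 }; in particular this language belongs to GCID_S(3; 1, 1, 0; 0, 0, 0). -/

import Mathlib

/-!
Graph-controlled insertion-deletion (GCID) systems.

Symbols are drawn from the universal symbol set `ℕ`, strings are lists of
symbols.  A GCID system `Π = (k, V, T, A, H, i0, F, R)` has `k` components;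
rules `(i, r, j)` move a string from component `i` to component `j`, where
`r` is an insertion rule `(u, η, v)_I` (rewriting `uv → uηv`) or a deletion
rule `(u, δ, v)_D` (rewriting `uδv → uv`), with `u, v ∈ V*` and `η, δ ∈ V⁺`.
-/

namespace GCIDPaper

/-- Strings over the universal symbol set `ℕ`. -/
abbrev Word : Type := List ℕ

/-- An insertion rule `(u, s, v)_I` (when `isInsertion = true`) or a deletion
rule `(u, s, v)_D` (when `isInsertion = false`), with left context `lctx = u`,
inserted resp. deleted string `core = s`, and right context `rctx = v`. -/
structure InsDelRule : Type where
  isInsertion : Bool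
  lctx : Word
  core : Word
  rctx : Word
  deriving DecidableEq

/-- The insertion rule `(u, η, v)_I`. -/
def insRule (u η v : Word) : InsDelRule := ⟨true, u, η, v⟩

/-- The deletion rule `(u, δ, v)_D`. -/
def delRule (u δ v : Word) : InsDelRule := ⟨false, u, δ, v⟩

/-- Applying a rule to a string: the insertion rule `(u, η, v)_I` corresponds
to the rewriting `uv → uηv`, the deletion rule `(u, δ, v)_D` to `uδv → uv`. -/
def InsDelRule.Applies (r : InsDelRule) (w w' : Word) : Prop :=
  (r.isInsertion = true →
    ∃ x y, w = x ++ r.lctx ++ r.rctx ++ y ∧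
      w' = x ++ r.lctx ++ r.core ++ r.rctx ++ y) ∧
  (r.isInsertion = false →
    ∃ x y, w = x ++ r.lctx ++ r.core ++ r.rctx ++ y ∧
      w' = x ++ r.lctx ++ r.rctx ++ y)

/-- A graph-controlled insertion-deletion system.  The components are
numbered `1, …, k`; `i0` is the initial component, `F` the set of final
components, `axioms` the finite set of axioms (placed in component `i0`),
and `R` the finite set of rules `(i, r, j)`. -/
structure System : Type where
  k : ℕ
  V : Finset ℕ
  T : Finset ℕ
  axioms : Finset Word
  i0 : ℕ
  F : Finset ℕ
  R : Finset (ℕ × InsDelRule × ℕ)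
  k_pos : 1 ≤ k
  T_sub_V : T ⊆ V
  axioms_over_V : ∀ w ∈ axioms, ∀ a ∈ w, a ∈ V
  i0_mem : i0 ∈ Finset.Icc 1 k
  F_sub : F ⊆ Finset.Icc 1 k
  R_wf : ∀ q ∈ R, q.1 ∈ Finset.Icc 1 k ∧ q.2.2 ∈ Finset.Icc 1 k ∧
    q.2.1.core ≠ [] ∧ (∀ a ∈ q.2.1.lctx, a ∈ V) ∧
    (∀ a ∈ q.2.1.core, a ∈ V) ∧ (∀ a ∈ q.2.1.rctx, a ∈ V)

/-- One derivation step between configurations: `(w)_i ⇒ (w')_j` if some rule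
`(i, r, j)` of the system applied to `w` yields `w'`. -/
def Step (S : System) (c c' : Word × ℕ) : Prop :=
  ∃ q ∈ S.R, q.1 = c.2 ∧ q.2.2 = c'.2 ∧ q.2.1.Applies c.1 c'.1

/-- The reflexive-transitive closure `⇒*` of the step relation. -/
def Derives (S : System) : Word × ℕ → Word × ℕ → Prop :=
  Relation.ReflTransGen (Step S)

/-- The language generated:
`L(Π) = { w ∈ T* : (x)_{i0} ⇒* (w)_{i_f} for some axiom x and some i_f ∈ F }`. -/
def language (S : System) : Set Word :=
  { w | (∀ a ∈ w, a ∈ S.T) ∧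
    ∃ x ∈ S.axioms, ∃ f ∈ S.F, Derives S (x, S.i0) (w, f) }

/-- A single rule obeys the size bounds `(n, i', i''; m, j', j'')`. -/
def InsDelRule.SizeLE (r : InsDelRule) (n i' i'' m j' j'' : ℕ) : Prop :=
  (r.isInsertion = true →
    r.core.length ≤ n ∧ r.lctx.length ≤ i' ∧ r.rctx.length ≤ i'') ∧
  (r.isInsertion = false →
    r.core.length ≤ m ∧ r.lctx.length ≤ j' ∧ r.rctx.length ≤ j'')

/-- The system has size `(k; n, i', i''; m, j', j'')`. -/
def HasSize (S : System) (k n i' i'' m j' j'' : ℕ) : Prop :=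
  S.k = k ∧ ∀ q ∈ S.R, q.2.1.SizeLE n i' i'' m j' j''

/-- Star-controlled: the underlying undirected control graph (with an edge
`{Ci, Cj}` whenever there is a rule `(i, r, j)`) has exactly the edge set
`{ {C1, Ci} : 2 ≤ i ≤ k }`; in particular there are no loops. -/
def StarControlled (S : System) : Prop :=
  (∀ q ∈ S.R, ∃ i ∈ Finset.Icc 2 S.k, ({q.1, q.2.2} : Finset ℕ) = {1, i}) ∧
  (∀ i ∈ Finset.Icc 2 S.k, ∃ q ∈ S.R, ({q.1, q.2.2} : Finset ℕ) = {1, i})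

/-- The class `GCID(k; n, i', i''; m, j', j'')` of languages generated by GCID
systems of the given size. -/
def GCIDClass (k n i' i'' m j' j'' : ℕ) : Set (Set Word) :=
  { L | ∃ S : System, HasSize S k n i' i'' m j' j'' ∧ language S = L }

/-- The class `GCID_S(k; n, i', i''; m, j', j'')` of languages generated by
star-controlled GCID systems of the given size. -/
def GCID_S (k n i' i'' m j' j'' : ℕ) : Set (Set Word) :=
  { L | ∃ S : System, StarControlled S ∧ HasSize S k n i' i'' m j' j'' ∧
    language S = L }

/-- The star-controlled GCID system with three components, alphabet
`V = T = {a, b, c, d}` (encoded as `a = 0`, `b = 1`, `c = 2`, `d = 3`), axiom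
`abcd` in component `C1`, initial and final component `C1`, and rules
`r1.1 : (1, (a, a, λ)_I, 2)`, `r1.2 : (1, (b, b, λ)_I, 3)`,
`r2.1 : (2, (c, c, λ)_I, 1)`, `r3.1 : (3, (d, d, λ)_I, 1)`. -/
def crossSerialSystem : System where
  k := 3
  V := {0, 1, 2, 3}
  T := {0, 1, 2, 3}
  axioms := {[0, 1, 2, 3]}
  i0 := 1
  F := {1}
  R := {(1, insRule [0] [0] [], 2), (1, insRule [1] [1] [], 3),
        (2, insRule [2] [2] [], 1), (3, insRule [3] [3] [], 1)}
  k_pos := by decide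
  T_sub_V := by decide
  axioms_over_V := by decide
  i0_mem := by decide
  F_sub := by decide
  R_wf := by decide

/-- The cross-serial-dependency language `{ aⁿbᵐcⁿdᵐ : m, n ≥ 1 }`. -/
def crossSerialLang : Set Word :=
  { w | ∃ n m : ℕ, 1 ≤ n ∧ 1 ≤ m ∧
    w = List.replicate n 0 ++ List.replicate m 1 ++
        List.replicate n 2 ++ List.replicate m 3 }

/-!
Every rule inserts a copy of a letter directly after an occurrence of the same letter, so every
reachable word stays sorted, i.e. of the shape `aᵖ bᵠ cʳ dˢ`. Leaving `C1` by inserting an `a`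
(resp. `b`) sends the string to `C2` (resp. `C3`), whose only rule inserts a `c` (resp. `d`) and
returns to `C1`; hence in `C1` the words satisfy `#a = #c` and `#b = #d`, and a sorted word is
determined by its letter counts. Conversely, the round trips `C1 → C2 → C1` and `C1 → C3 → C1`
pump `n` and `m` independently, starting from the axiom `abcd`.
-/

open List

theorem _root_.List.SortedLE.append_cons_cons {α : Type*} [Preorder α] {x y : List α} {a : α}
    (h : (x ++ a :: y).SortedLE) : (x ++ a :: a :: y).SortedLE := by
  simp only [sortedLE_iff_pairwise, pairwise_append, pairwise_cons, mem_cons] at h ⊢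
  obtain ⟨hx, ⟨hay, hy⟩, hxy⟩ := h
  refine ⟨hx, ⟨fun b hb => ?_, hay, hy⟩, fun b hb c hc => ?_⟩
  · rcases hb with rfl | hb
    exacts [le_rfl, hay b hb]
  · exact hxy b hb c (by rcases hc with rfl | rfl | hc <;> simp_all)

theorem insRule_applies_iff {u η v w w' : Word} :
    (insRule u η v).Applies w w' ↔
      ∃ x y, w = x ++ u ++ v ++ y ∧ w' = x ++ u ++ η ++ v ++ y := by
  simp [InsDelRule.Applies, insRule]

theorem step_of_duplicating_rule {S : System} {i j a : ℕ} {w w' : Word}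
    (hr : (i, insRule [a] [a] [], j) ∈ S.R) (x y : Word) (hw : w = x ++ a :: y)
    (hw' : w' = x ++ a :: a :: y) : Step S (w, i) (w', j) :=
  ⟨_, hr, rfl, rfl, insRule_applies_iff.2 ⟨x, y, by simp [hw], by simp [hw']⟩⟩

def crossWord (n m : ℕ) : Word :=
  replicate n 0 ++ replicate m 1 ++ replicate n 2 ++ replicate m 3

theorem crossWord_sortedLE (n m : ℕ) : (crossWord n m).SortedLE := by
  simp [crossWord, sortedLE_iff_pairwise, pairwise_append, pairwise_replicate, mem_replicate]
  omega

theorem count_crossWord (n m a : ℕ) :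
    (crossWord n m).count a =
      if a = 0 ∨ a = 2 then n else if a = 1 ∨ a = 3 then m else 0 := by
  rcases a with _ | _ | _ | _ | a <;> simp [crossWord, count_replicate]

theorem eq_crossWord_of_sortedLE {w : Word} (hw : w.SortedLE) (hle : ∀ a ∈ w, a ≤ 3)
    (h02 : w.count 2 = w.count 0) (h13 : w.count 3 = w.count 1) :
    w = crossWord (w.count 0) (w.count 1) := by
  refine (perm_iff_count.2 fun a => ?_).eq_of_sortedLE hw (crossWord_sortedLE _ _)
  rw [count_crossWord]
  rcases a with _ | _ | _ | _ | a <;> simp [h02, h13]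
  exact count_eq_zero.2 fun ha => by have := hle _ ha; omega

/-- In `C2` one `a` is still waiting for its `c`, in `C3` one `b` for its `d`. -/
structure CrossInvariant (c : Word × ℕ) : Prop where
  sortedLE : c.1.SortedLE
  le_three : ∀ a ∈ c.1, a ≤ 3
  count_zero_pos : 0 < c.1.count 0
  count_one_pos : 0 < c.1.count 1
  count_zero_eq : c.1.count 0 = c.1.count 2 + if c.2 = 2 then 1 else 0
  count_one_eq : c.1.count 1 = c.1.count 3 + if c.2 = 3 then 1 else 0

theorem exists_of_step_crossSerialSystem {w w' : Word} {i j : ℕ}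
    (h : Step crossSerialSystem (w, i) (w', j)) :
    ∃ a x y, w = x ++ a :: y ∧ w' = x ++ a :: a :: y ∧
      ((i, a, j) = (1, 0, 2) ∨ (i, a, j) = (1, 1, 3) ∨
        (i, a, j) = (2, 2, 1) ∨ (i, a, j) = (3, 3, 1)) := by
  obtain ⟨q, hq, rfl, rfl, happ⟩ := h
  simp only [crossSerialSystem, Finset.mem_insert, Finset.mem_singleton] at hq
  rcases hq with rfl | rfl | rfl | rfl <;>
  · obtain ⟨x, y, hw, hw'⟩ := insRule_applies_iff.1 happ
    exact ⟨_, x, y, by simpa using hw, by simpa using hw', by simp⟩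

theorem CrossInvariant.step {c c' : Word × ℕ} (hc : CrossInvariant c)
    (h : Step crossSerialSystem c c') : CrossInvariant c' := by
  obtain ⟨w, i⟩ := c
  obtain ⟨w', j⟩ := c'
  obtain ⟨a, x, y, rfl, rfl, hr⟩ := exists_of_step_crossSerialSystem h
  obtain ⟨hs, hle, h0, h1, h02, h13⟩ := hc
  refine ⟨hs.append_cons_cons, fun b hb => hle b (by simp_all), ?_, ?_, ?_, ?_⟩ <;>
  · simp only [Prod.mk.injEq] at hr
    rcases hr with ⟨rfl, rfl, rfl⟩ | ⟨rfl, rfl, rfl⟩ | ⟨rfl, rfl, rfl⟩ | ⟨rfl, rfl, rfl⟩ <;>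
    simp_all [count_append] <;> omega

theorem derives_crossWord_succ_left (n m : ℕ) :
    Derives crossSerialSystem (crossWord (n + 1) m, 1) (crossWord (n + 2) m, 1) :=
  .tail (.single (step_of_duplicating_rule (a := 0) (j := 2) (by decide) []
      (replicate n 0 ++ replicate m 1 ++ replicate (n + 1) 2 ++ replicate m 3)
      (by simp [crossWord, replicate_succ]) rfl))
    (step_of_duplicating_rule (a := 2) (by decide) (replicate (n + 2) 0 ++ replicate m 1)
      (replicate n 2 ++ replicate m 3) (by simp [replicate_succ])
      (by simp [crossWord, replicate_succ]))

theorem derives_crossWord_succ_right (n m : ℕ) :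
    Derives crossSerialSystem (crossWord n (m + 1), 1) (crossWord n (m + 2), 1) :=
  .tail (.single (step_of_duplicating_rule (a := 1) (j := 3) (by decide) (replicate n 0)
      (replicate m 1 ++ replicate n 2 ++ replicate (m + 1) 3)
      (by simp [crossWord, replicate_succ]) rfl))
    (step_of_duplicating_rule (a := 3) (by decide)
      (replicate n 0 ++ replicate (m + 2) 1 ++ replicate n 2) (replicate m 3)
      (by simp [replicate_succ]) (by simp [crossWord, replicate_succ]))

theorem derives_crossWord (n m : ℕ) :
    Derives crossSerialSystem (crossWord 1 1, 1) (crossWord (n + 1) (m + 1), 1) := by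
  induction n with
  | zero =>
    induction m with
    | zero => exact .refl
    | succ m ih => exact ih.trans (derives_crossWord_succ_right 1 m)
  | succ n ih => exact ih.trans (derives_crossWord_succ_left n (m + 1))

theorem CrossInvariant.derives {c c' : Word × ℕ} (hc : CrossInvariant c)
    (h : Derives crossSerialSystem c c') : CrossInvariant c' :=
  Relation.ReflTransGen.rec hc (fun _ hstep ih => ih.step hstep) h

theorem crossInvariant_axiom : CrossInvariant ([0, 1, 2, 3], 1) :=
  ⟨crossWord_sortedLE 1 1, by decide, by decide, by decide, by decide, by decide⟩

theorem crossSerialSystem_language : language crossSerialSystem = crossSerialLang := by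
  ext w
  constructor
  · rintro ⟨-, x, hx, f, hf, hder⟩
    simp only [crossSerialSystem, Finset.mem_singleton] at hx hf
    subst hx hf
    obtain ⟨hs, hle, h0, h1, h02, h13⟩ := crossInvariant_axiom.derives hder
    exact ⟨_, _, h0, h1, eq_crossWord_of_sortedLE hs hle (by simpa using h02.symm)
      (by simpa using h13.symm)⟩
  · rintro ⟨n, m, hn, hm, rfl⟩
    obtain ⟨n, rfl⟩ := Nat.exists_eq_add_of_le' hn
    obtain ⟨m, rfl⟩ := Nat.exists_eq_add_of_le' hm
    refine ⟨fun a ha => ?_, _, Finset.mem_singleton_self _, 1, Finset.mem_singleton_self _,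
      derives_crossWord n m⟩
    simp only [mem_append, mem_replicate] at ha
    simp only [crossSerialSystem, Finset.mem_insert, Finset.mem_singleton]
    omega

theorem crossSerialSystem_starControlled : StarControlled crossSerialSystem := by
  unfold StarControlled
  decide

theorem crossSerialSystem_hasSize : HasSize crossSerialSystem 3 1 1 0 0 0 0 := by
  unfold HasSize InsDelRule.SizeLE
  decide

/-- The system `crossSerialSystem` is star-controlled, generates exactly the
cross-serial-dependency language `{ aⁿbᵐcⁿdᵐ : m, n ≥ 1 }`, and in particular
this language belongs to `GCID_S(3; 1, 1, 0; 0, 0, 0)`. -/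
theorem crossSerialSystem_generates :
    StarControlled crossSerialSystem ∧
      language crossSerialSystem = crossSerialLang ∧
      crossSerialLang ∈ GCID_S 3 1 1 0 0 0 0 :=
  ⟨crossSerialSystem_starControlled, crossSerialSystem_language,
    crossSerialSystem, crossSerialSystem_starControlled, crossSerialSystem_hasSize,
    crossSerialSystem_language⟩

end GCIDPaper
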